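/- For positive integers t and k with k > 1, let T be the tree consisting of a root v adjacent to one endpoint of each of k+1 vertex-disjoint paths of t vertices each, with threshold function τ(v) = k and τ(u) = 1 for all other vertices u. Then {v} is the unique minimum target set, t_τ({v}) = t, and the set S' consisting of the far-end leaves of any k of the k+1 paths is a target set with t_τ(S') = 2t; in particular t_τ(T) ≥ 2t. -/

import Mathlib

/-
Both activation processes are described by an activation schedule `f : V → ℕ`: if a vertex
with `f x > m` has at least `τ x` neighbours in `{f ≤ m}` exactly when `f x = m + 1`, then
`m` rounds of the interval operator turn `{f = 0}` into `{f ≤ m}`, so the activation time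
is `max f`. Started at the root, `f` is the depth, with maximum `t`. Started at the far
leaves of `k` legs, those legs fill inwards in `t - 1` rounds, the root (threshold `k`)
fires at round `t`, and the remaining leg then fills outwards, its leaf at round `2t`.
Conversely, a single non-root vertex (or nothing) never escapes its leg, because the root
has only one neighbour in a leg and needs `k ≥ 2` of them.
-/

namespace TSS

variable {V : Type*}

/-- The interval (one activation step): `S` together with all vertices having
at least `τ v` neighbors in `S`. -/
def interval (G : SimpleGraph V) (τ : V → ℕ) (S : Set V) : Set V :=
  S ∪ {v | τ v ≤ (G.neighborSet v ∩ S).ncard}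

/-- `S` is a target set if iterating the interval operator reaches all of `V`. -/
def IsTargetSet (G : SimpleGraph V) (τ : V → ℕ) (S : Set V) : Prop :=
  ∃ t : ℕ, (interval G τ)^[t] S = Set.univ

/-- The activation time of a set: least `t` with `I^[t+1] S = I^[t] S`. -/
noncomputable def actTime (G : SimpleGraph V) (τ : V → ℕ) (S : Set V) : ℕ :=
  sInf {t : ℕ | (interval G τ)^[t + 1] S = (interval G τ)^[t] S}

/-- The maximum activation time over all target sets. -/
noncomputable def maxTime (G : SimpleGraph V) (τ : V → ℕ) : ℕ :=
  sSup {t : ℕ | ∃ S : Set V, IsTargetSet G τ S ∧ actTime G τ S = t}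

/-- The activation time of a vertex `v` for an initial set `S`. -/
noncomputable def vTime (G : SimpleGraph V) (τ : V → ℕ) (S : Set V) (v : V) : ℕ :=
  sInf {k : ℕ | v ∈ (interval G τ)^[k] S}

/-- The set of vertices eventually activated from `S`. -/
def hull (G : SimpleGraph V) (τ : V → ℕ) (S : Set V) : Set V :=
  {v | ∃ k : ℕ, v ∈ (interval G τ)^[k] S}

end TSS

open TSS

/-- Vertex set of the spider tree: a root plus k+1 paths of t vertices each. -/
def SpiderV (t k : ℕ) : Type := Unit ⊕ (Fin (k + 1) × Fin t)

/-- The spider tree: root adjacent to the first vertex of each of the k+1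
paths of t vertices. -/
def spider (t k : ℕ) : SimpleGraph (SpiderV t k) :=
  SimpleGraph.fromRel (fun a b =>
    match a, b with
    | Sum.inl _, Sum.inr (_, i) => i.1 = 0
    | Sum.inr (j, i), Sum.inr (j', i') => j = j' ∧ i.1 + 1 = i'.1
    | _, _ => False)

/-- Thresholds: k at the root, 1 elsewhere. -/
def spiderτ (t k : ℕ) : SpiderV t k → ℕ
  | Sum.inl _ => k
  | Sum.inr _ => 1

namespace TSS

variable {V : Type*} {G : SimpleGraph V} {τ : V → ℕ} {S : Set V}

lemma subset_interval : S ⊆ interval G τ S := Set.subset_union_left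

lemma interval_univ : interval G τ Set.univ = Set.univ :=
  Set.univ_subset_iff.mp subset_interval

lemma interval_mono [Finite V] {T : Set V} (h : S ⊆ T) : interval G τ S ⊆ interval G τ T :=
  Set.union_subset_union h fun _ hv =>
    le_trans hv (Set.ncard_le_ncard (Set.inter_subset_inter_right _ h))

lemma actTime_eq {N : ℕ} (hN : (interval G τ)^[N] S = Set.univ)
    (hlt : ∀ m < N, (interval G τ)^[m] S ≠ Set.univ) : actTime G τ S = N := by
  suffices h : {m | (interval G τ)^[m + 1] S = (interval G τ)^[m] S} = Set.Ici N by
    rw [actTime, h, csInf_Ici]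
  ext m
  refine ⟨fun hm => ?_, fun hm => ?_⟩
  · rw [Set.mem_Ici]
    by_contra! hmN
    have hfix : Function.IsFixedPt (interval G τ) ((interval G τ)^[m] S) := by
      rw [Function.IsFixedPt, ← Function.iterate_succ_apply' (interval G τ) m S]
      exact hm
    apply hlt m hmN
    rw [← hN, ← Nat.sub_add_cancel hmN.le, Function.iterate_add_apply, (hfix.iterate _).eq]
  · have hm_univ : (interval G τ)^[m] S = Set.univ := by
      rw [← Nat.sub_add_cancel (Set.mem_Ici.mp hm), Function.iterate_add_apply, hN,
        Function.iterate_fixed interval_univ]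
    rw [Set.mem_ofPred_eq, Function.iterate_succ_apply', hm_univ, interval_univ]

lemma le_ncard_iterate_interval [Finite V] {n : ℕ}
    (h : ∀ l < n, (interval G τ)^[l + 1] S ≠ (interval G τ)^[l] S) :
    n ≤ ((interval G τ)^[n] S).ncard := by
  induction n with
  | zero => exact Nat.zero_le _
  | succ n ih =>
    have hsub : (interval G τ)^[n] S ⊆ (interval G τ)^[n + 1] S := by
      rw [Function.iterate_succ_apply']
      exact subset_interval
    have hss := hsub.ssubset_of_ne (h n n.lt_succ_self).symm
    exact (ih fun l hl => h l (hl.trans n.lt_succ_self)).trans_lt (Set.ncard_lt_ncard hss)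

lemma actTime_le_card [Finite V] : actTime G τ S ≤ Nat.card V := by
  by_contra! h
  have hgrow : ∀ l < Nat.card V + 1, (interval G τ)^[l + 1] S ≠ (interval G τ)^[l] S :=
    fun l hl => Nat.notMem_of_lt_sInf (lt_of_lt_of_le hl h)
  have := (le_ncard_iterate_interval hgrow).trans (Set.ncard_le_card _)
  omega

lemma actTime_le_maxTime [Finite V] (hS : IsTargetSet G τ S) :
    actTime G τ S ≤ maxTime G τ :=
  le_csSup ⟨Nat.card V, by rintro _ ⟨T, -, rfl⟩; exact actTime_le_card⟩ ⟨S, hS, rfl⟩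

lemma not_isTargetSet_of_interval_subset [Finite V] {P : Set V} (hP : interval G τ P ⊆ P)
    (hSP : S ⊆ P) (hP_ne : P ≠ Set.univ) : ¬ IsTargetSet G τ S := by
  rintro ⟨n, hn⟩
  have hiter : ∀ m, (interval G τ)^[m] S ⊆ P := by
    intro m
    induction m with
    | zero => exact hSP
    | succ m ih =>
      rw [Function.iterate_succ_apply']
      exact (interval_mono ih).trans hP
  exact hP_ne (Set.univ_subset_iff.mp (hn ▸ hiter n))

/-- `f x` is the round in which `x` becomes active when the process starts from
`{x | f x = 0}`. -/
def IsSchedule (G : SimpleGraph V) (τ : V → ℕ) (f : V → ℕ) : Prop :=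
  ∀ x m, m < f x → (τ x ≤ (G.neighborSet x ∩ {y | f y ≤ m}).ncard ↔ f x = m + 1)

namespace IsSchedule

variable {f : V → ℕ}

lemma iterate_interval (hf : IsSchedule G τ f) (m : ℕ) :
    (interval G τ)^[m] {y | f y = 0} = {y | f y ≤ m} := by
  induction m with
  | zero => simp
  | succ m ih =>
    rw [Function.iterate_succ_apply', ih]
    ext x
    simp only [interval, Set.mem_union, Set.mem_ofPred_eq]
    rcases le_or_gt (f x) m with hx | hx
    · exact iff_of_true (Or.inl hx) (by omega)
    · rw [hf x m hx]
      omega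

lemma isTargetSet (hf : IsSchedule G τ f) {N : ℕ} (hN : ∀ y, f y ≤ N) :
    IsTargetSet G τ {y | f y = 0} :=
  ⟨N, by rw [hf.iterate_interval]; exact Set.eq_univ_of_forall hN⟩

lemma actTime_eq (hf : IsSchedule G τ f) {N : ℕ} (hN : ∀ y, f y ≤ N) {x : V} (hx : f x = N) :
    actTime G τ {y | f y = 0} = N := by
  refine TSS.actTime_eq (by rw [hf.iterate_interval]; exact Set.eq_univ_of_forall hN) ?_
  intro m hm h
  rw [hf.iterate_interval] at h
  have : f x ≤ m := Set.eq_univ_iff_forall.mp h x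
  omega

end IsSchedule

lemma one_le_ncard_neighborSet_inter_iff [Finite V] {f : V → ℕ} {x : V} {m : ℕ}
    (hlip : ∀ y, G.Adj x y → f x ≤ f y + 1) (hpred : ∃ y, G.Adj x y ∧ f y + 1 = f x)
    (hm : m < f x) :
    1 ≤ (G.neighborSet x ∩ {y | f y ≤ m}).ncard ↔ f x = m + 1 := by
  change 0 < _ ↔ _
  rw [Set.ncard_pos]
  constructor
  · rintro ⟨y, hxy, hy⟩
    have := hlip y hxy
    simp only [Set.mem_ofPred_eq] at hy
    omega
  · obtain ⟨y, hxy, hy⟩ := hpred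
    exact fun hx => ⟨y, hxy, by simp only [Set.mem_ofPred_eq]; omega⟩

end TSS

instance (t k : ℕ) : Finite (SpiderV t k) :=
  inferInstanceAs (Finite (Unit ⊕ Fin (k + 1) × Fin t))

namespace Spider

variable {t k : ℕ}

@[simp]
lemma adj_inl_inl {u u' : Unit} : ¬ (spider t k).Adj (.inl u) (.inl u') := by
  unfold spider SpiderV
  simp

@[simp]
lemma adj_inl_inr {u : Unit} {j : Fin (k + 1)} {i : Fin t} :
    (spider t k).Adj (.inl u) (.inr (j, i)) ↔ i.1 = 0 := by
  unfold spider SpiderV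
  simp

@[simp]
lemma adj_inr_inl {u : Unit} {j : Fin (k + 1)} {i : Fin t} :
    (spider t k).Adj (.inr (j, i)) (.inl u) ↔ i.1 = 0 :=
  ((spider t k).adj_comm _ _).trans adj_inl_inr

@[simp]
lemma adj_inr_inr {j j' : Fin (k + 1)} {i i' : Fin t} :
    (spider t k).Adj (.inr (j, i)) (.inr (j', i')) ↔
      j = j' ∧ (i.1 + 1 = i'.1 ∨ i'.1 + 1 = i.1) := by
  unfold spider SpiderV
  simp [Fin.ext_iff]
  omega

def depth : SpiderV t k → ℕ
  | .inl _ => 0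
  | .inr (_, i) => i.1 + 1

lemma isSchedule_depth : IsSchedule (spider t k) (spiderτ t k) depth := by
  rintro (_ | ⟨j, i⟩) m hm
  · exact absurd hm (Nat.not_lt_zero m)
  · refine one_le_ncard_neighborSet_inter_iff ?_ ?_ hm
    · rintro (_ | ⟨j', i'⟩) h <;> simp [depth] at h ⊢ <;> omega
    · by_cases hi : i.1 = 0
      · exact ⟨.inl (), by simp [hi], by simp [depth, hi]⟩
      · exact ⟨.inr (j, ⟨i.1 - 1, by omega⟩), by simp; omega, by simp [depth]; omega⟩

lemma depth_le : ∀ x : SpiderV t k, depth x ≤ t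
  | .inl _ => Nat.zero_le t
  | .inr (_, i) => i.isLt

lemma setOf_depth_eq_zero : {x : SpiderV t k | depth x = 0} = {.inl ()} := by
  refine Set.eq_singleton_iff_unique_mem.mpr ⟨rfl, ?_⟩
  rintro (_ | ⟨j, i⟩) hx
  · rfl
  · exact absurd hx (Nat.succ_ne_zero _)

/-- Activation times from the far leaves of the legs `j ≠ j₀`: these legs fill inwards, the
root fires at time `t`, and leg `j₀` then fills outwards. -/
def leafTime (j₀ : Fin (k + 1)) : SpiderV t k → ℕ
  | .inl _ => t
  | .inr (j, i) => if j = j₀ then t + 1 + i.1 else t - 1 - i.1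

lemma le_ncard_neighborSet_inl_inter_iff (hk : 0 < k) (j₀ : Fin (k + 1)) {u : Unit} {m : ℕ}
    (hm : m < t) :
    k ≤ ((spider t k).neighborSet (.inl u) ∩ {y | leafTime j₀ y ≤ m}).ncard ↔ t = m + 1 := by
  rcases Nat.lt_or_ge (m + 1) t with hlt | hge
  · have hempty : (spider t k).neighborSet (.inl u) ∩ {y | leafTime j₀ y ≤ m} = ∅ := by
      refine Set.eq_empty_of_forall_notMem ?_
      rintro (_ | ⟨j, i⟩) ⟨hadj, hy⟩
      · exact adj_inl_inl hadj
      · have hi : i.1 = 0 := adj_inl_inr.mp hadj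
        have hy : leafTime j₀ (.inr (j, i) : SpiderV t k) ≤ m := hy
        simp only [leafTime] at hy
        split_ifs at hy <;> omega
    rw [hempty, Set.ncard_empty]
    omega
  · refine iff_of_true ?_ (by omega)
    let leg₀ : Fin (k + 1) → SpiderV t k := fun j => .inr (j, ⟨0, by omega⟩)
    have hinj : leg₀.Injective := fun a b h => congrArg Prod.fst (Sum.inr_injective h)
    calc k = ({j₀}ᶜ : Set (Fin (k + 1))).ncard := by
          rw [Set.ncard_compl, Set.ncard_singleton, Nat.card_eq_fintype_card, Fintype.card_fin]
          omega
      _ = (leg₀ '' {j₀}ᶜ).ncard := (Set.ncard_image_of_injective _ hinj).symm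
      _ ≤ _ := by
          refine Set.ncard_le_ncard ?_
          rintro _ ⟨j, hj, rfl⟩
          refine ⟨adj_inl_inr.mpr rfl, ?_⟩
          show leafTime j₀ (.inr (j, _) : SpiderV t k) ≤ m
          simp only [leafTime, if_neg (show j ≠ j₀ from hj)]
          omega

lemma isSchedule_leafTime (hk : 0 < k) (j₀ : Fin (k + 1)) :
    IsSchedule (spider t k) (spiderτ t k) (leafTime j₀) := by
  rintro (u | ⟨j, i⟩) m hm
  · exact le_ncard_neighborSet_inl_inter_iff hk j₀ hm
  · refine one_le_ncard_neighborSet_inter_iff ?_ ?_ hm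
    · rintro (_ | ⟨j', i'⟩) h <;> simp [leafTime] at h ⊢ <;> split_ifs <;> omega
    · by_cases hj : j = j₀
      · subst hj
        by_cases hi : i.1 = 0
        · exact ⟨.inl (), by simp [hi], by simp [leafTime, hi]⟩
        · exact ⟨.inr (j, ⟨i.1 - 1, by omega⟩), by simp; omega, by simp [leafTime]; omega⟩
      · have hm : m < t - 1 - i.1 := by simpa [leafTime, hj] using hm
        exact ⟨.inr (j, ⟨i.1 + 1, by omega⟩), by simp, by simp [leafTime, hj]; omega⟩

lemma leafTime_le (j₀ : Fin (k + 1)) : ∀ x : SpiderV t k, leafTime j₀ x ≤ 2 * t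
  | .inl _ => by simp only [leafTime]; omega
  | .inr (j, i) => by simp only [leafTime]; split_ifs <;> omega

lemma setOf_leafTime_eq_zero (ht : 0 < t) (j₀ : Fin (k + 1)) :
    {x : SpiderV t k | leafTime j₀ x = 0} =
      {x | ∃ j : Fin (k + 1), j ≠ j₀ ∧ x = Sum.inr (j, ⟨t - 1, Nat.sub_lt ht Nat.one_pos⟩)} := by
  ext (_ | ⟨j, i⟩)
  · exact iff_of_false (fun h : t = 0 => by omega) fun ⟨j, _, h⟩ => Sum.inl_ne_inr h
  · change (if j = j₀ then _ else _) = 0 ↔ ∃ j', j' ≠ j₀ ∧ (Sum.inr (j, i) : Unit ⊕ _) = _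
    simp only [Sum.inr.injEq, Prod.mk.injEq]
    split_ifs with hj
    · exact iff_of_false (by omega) fun ⟨_, hne, hj', _⟩ => hne (hj'.symm.trans hj)
    · constructor
      · exact fun h => ⟨j, hj, rfl, Fin.ext (by simp only; omega)⟩
      · rintro ⟨_, _, rfl, rfl⟩
        exact Nat.sub_self _

def leg (j : Fin (k + 1)) : Set (SpiderV t k) := Set.range fun i => .inr (j, i)

lemma leg_ne_univ (j : Fin (k + 1)) : leg j ≠ (Set.univ : Set (SpiderV t k)) := fun h =>
  let ⟨_, hi⟩ := Set.eq_univ_iff_forall.mp h (.inl ())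
  Sum.inr_ne_inl hi

lemma interval_leg_subset (hk : 1 < k) (j : Fin (k + 1)) :
    interval (spider t k) (spiderτ t k) (leg j) ⊆ leg j := by
  rintro (u | ⟨j', i⟩) (hx | hx)
  · exact hx
  · have hle : ((spider t k).neighborSet (.inl u) ∩ leg j).ncard ≤ 1 := by
      refine (Set.ncard_le_one).mpr ?_
      rintro _ ⟨ha, i, rfl⟩ _ ⟨hb, i', rfl⟩
      have := adj_inl_inr.mp ha
      have := adj_inl_inr.mp hb
      congr
      omega
    exact absurd (le_trans hx hle) (by change ¬ k ≤ 1; omega)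
  · exact hx
  · obtain ⟨_, hxy, i', rfl⟩ := (Set.ncard_pos).mp hx
    exact ⟨i, by rw [(adj_inr_inr.mp hxy).1]⟩

lemma eq_root_of_isTargetSet (hk : 1 < k) {S : Set (SpiderV t k)}
    (hS : IsTargetSet (spider t k) (spiderτ t k) S) (hcard : S.ncard < 2) : S = {.inl ()} := by
  obtain rfl | ⟨a, rfl⟩ := (Set.ncard_le_one_iff_subsingleton.mp (show S.ncard ≤ 1 by omega)).eq_empty_or_singleton
  · exact absurd hS (not_isTargetSet_of_interval_subset (interval_leg_subset hk 0)
      (Set.empty_subset _) (leg_ne_univ 0))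
  · rcases a with _ | ⟨j, i⟩
    · rfl
    · exact absurd hS (not_isTargetSet_of_interval_subset (interval_leg_subset hk j)
        (Set.singleton_subset_iff.mpr ⟨i, rfl⟩) (leg_ne_univ j))

end Spider

open Spider in
/-- {root} is the unique minimum target set of the spider, with
activation time t; and the far-end leaves of any k of the k+1 paths form a
target set with activation time 2t; in particular t_τ(T) ≥ 2t. -/
theorem stmt14 (t k : ℕ) (ht : 0 < t) (hk : 1 < k) :
    TSS.IsTargetSet (spider t k) (spiderτ t k) ({Sum.inl ()} : Set (SpiderV t k)) ∧
    (∀ S : Set (SpiderV t k), TSS.IsTargetSet (spider t k) (spiderτ t k) S →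
      S = {Sum.inl ()} ∨ 2 ≤ S.ncard) ∧
    TSS.actTime (spider t k) (spiderτ t k) ({Sum.inl ()} : Set (SpiderV t k)) = t ∧
    ∀ j₀ : Fin (k + 1),
      TSS.IsTargetSet (spider t k) (spiderτ t k)
        ({x | ∃ j : Fin (k + 1), j ≠ j₀ ∧
          x = Sum.inr (j, ⟨t - 1, Nat.sub_lt ht Nat.one_pos⟩)} : Set (SpiderV t k)) ∧
      TSS.actTime (spider t k) (spiderτ t k)
        ({x | ∃ j : Fin (k + 1), j ≠ j₀ ∧
          x = Sum.inr (j, ⟨t - 1, Nat.sub_lt ht Nat.one_pos⟩)} : Set (SpiderV t k)) = 2 * t ∧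
      2 * t ≤ TSS.maxTime (spider t k) (spiderτ t k) := by
  have hroot : IsTargetSet (spider t k) (spiderτ t k) {.inl ()} ∧
      actTime (spider t k) (spiderτ t k) {.inl ()} = t := by
    have hdepth_far : depth (.inr (0, ⟨t - 1, by omega⟩) : SpiderV t k) = t := by
      simp only [depth]
      omega
    rw [← setOf_depth_eq_zero]
    exact ⟨isSchedule_depth.isTargetSet depth_le, isSchedule_depth.actTime_eq depth_le hdepth_far⟩
  refine ⟨hroot.1, fun S hS => (lt_or_ge S.ncard 2).imp_left (eq_root_of_isTargetSet hk hS),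
    hroot.2, fun j₀ => ?_⟩
  have hf := isSchedule_leafTime (t := t) (by omega) j₀
  have hleaf_far : leafTime j₀ (.inr (j₀, ⟨t - 1, by omega⟩) : SpiderV t k) = 2 * t := by
    simp only [leafTime, ↓reduceIte]
    omega
  have hTS := hf.isTargetSet (leafTime_le j₀)
  have hact := hf.actTime_eq (leafTime_le j₀) hleaf_far
  rw [setOf_leafTime_eq_zero ht j₀] at hTS hact
  exact ⟨hTS, hact, hact ▸ actTime_le_maxTime hTS⟩
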